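/- arXiv:2502.06884 — 3 statements merged into one kernel-verified Lean document; each statement's English description precedes it below -/
import Mathlib

section
/- Let Z_1, …, Z_{n+1} be real-valued random variables on a probability space that are exchangeable. Let α ∈ (0,1), set k = ⌈(n+1)(1−α)⌉, and assume k ≤ n. Let q̂ be the (random) k-th smallest value among Z_1, …, Z_n. Then P(Z_{n+1} ≤ q̂) ≥ 1 − α. -/
open MeasureTheory

/-- The `k`-th smallest value (`k`-th order statistic) of a tuple of `n` real numbers:
the `k`-th entry of the tuple sorted in nondecreasing order. -/
noncomputable def kthSmallest {n : ℕ} (s : Fin n → ℝ) (k : ℕ) : ℝ :=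
  ((Multiset.ofList (List.ofFn s)).sort (· ≤ ·)).getD (k - 1) 0

/-!
Let `rank x j` be the number of coordinates of `x` strictly below `x j`. Whatever the values,
at least `k` of the `n + 1` coordinates have rank `< k` (the first `k` in sorted order), so the
`n + 1` events `{rank Z j < k}` have probabilities summing to at least `k`. Exchangeability makes
these probabilities equal, hence `P (rank Z last < k) ≥ k / (n + 1) ≥ 1 - α`. Finally, if fewer
than `k` of `Z 1, …, Z n` lie strictly below `Z (n + 1)`, then the `k`-th smallest of them is at
least `Z (n + 1)`.
-/

open Finset
open scoped ENNReal

theorem Finset.card_filter_comp_perm {ι : Type*} [Fintype ι] (π : Equiv.Perm ι)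
    (p : ι → Prop) [DecidablePred p] : #{i | p (π i)} = #{i | p i} :=
  card_equiv π (by simp)

namespace Tuple

section Rank

variable {α : Type*} [LinearOrder α]

def rank {ι : Type*} [Fintype ι] (x : ι → α) (j : ι) : ℕ :=
  #{i | x i < x j}

theorem rank_comp_perm {ι : Type*} [Fintype ι] (x : ι → α) (π : Equiv.Perm ι) (j : ι) :
    rank (x ∘ π) j = rank x (π j) :=
  card_filter_comp_perm π (fun i => x i < x (π j))

theorem rank_last {n : ℕ} (x : Fin (n + 1) → α) :
    rank x (Fin.last n) = #{i : Fin n | x i.castSucc < x (Fin.last n)} := by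
  simp only [rank, card_filter, Fin.sum_univ_castSucc, lt_irrefl, if_false, add_zero]

theorem rank_sort_apply_le {N : ℕ} (x : Fin N → α) (m : Fin N) : rank x (sort x m) ≤ m := by
  rw [← rank_comp_perm, rank, ← not_lt]
  exact mt (lt_card_lt_iff_apply_lt_of_monotone (monotone_sort x)).mp (lt_irrefl _)

theorem le_card_rank_lt {N k : ℕ} (x : Fin N → α) (hk : k ≤ N) : k ≤ #{j | rank x j < k} :=
  calc k = #{m : Fin N | m < k} := by simp [Fin.card_filter_val_lt, hk]
    _ ≤ #{m | rank x (sort x m) < k} :=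
      card_le_card fun m => by
        simpa using fun hm : (m : ℕ) < k => (rank_sort_apply_le x m).trans_lt hm
    _ = #{j | rank x j < k} := card_filter_comp_perm (sort x) (fun j => rank x j < k)

end Rank

theorem measurableSet_rank_lt {ι α : Type*} [Fintype ι] [LinearOrder α] [TopologicalSpace α]
    [OrderClosedTopology α] [SecondCountableTopology α] [MeasurableSpace α]
    [OpensMeasurableSpace α] (j : ι) (k : ℕ) :
    MeasurableSet {x : ι → α | rank x j < k} := by
  have hrank : (fun x : ι → α => rank x j) = fun x => ∑ i, if x i < x j then 1 else 0 := by
    funext x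
    exact card_filter _ _
  refine measurableSet_lt (hrank ▸ ?_) measurable_const
  exact Finset.measurable_sum _ fun i _ =>
    Measurable.ite (measurableSet_lt (measurable_pi_apply i) (measurable_pi_apply j))
      measurable_const measurable_const

end Tuple

theorem kthSmallest_succ {n : ℕ} (s : Fin n → ℝ) (m : Fin n) :
    kthSmallest s (m + 1) = s (Tuple.sort s m) := by
  have hsorted :
      (Multiset.ofList (List.ofFn s)).sort (· ≤ ·) = List.ofFn (s ∘ Tuple.sort s) :=
    List.Perm.eq_of_pairwise' (Multiset.pairwise_sort _ _)
      (Tuple.monotone_sort s).sortedLE_ofFn.pairwise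
      ((Multiset.coe_eq_coe.mp (Multiset.sort_eq _ _)).trans
        ((Tuple.sort s).ofFn_comp_perm s).symm)
  simp [kthSmallest, hsorted]

theorem le_kthSmallest_succ_of_card_lt_le {n : ℕ} (s : Fin n → ℝ) (m : Fin n) {t : ℝ}
    (h : #{i | s i < t} ≤ m) : t ≤ kthSmallest s (m + 1) := by
  rw [kthSmallest_succ]
  by_contra! hlt
  have hm_lt := (Tuple.lt_card_lt_iff_apply_lt_of_monotone (Tuple.monotone_sort s)).mpr hlt
  have hcard : #{i | (s ∘ Tuple.sort s) i < t} = #{i | s i < t} :=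
    card_filter_comp_perm (Tuple.sort s) (fun i => s i < t)
  omega

open scoped Classical in
theorem MeasureTheory.natCast_mul_measure_univ_le_sum {Ω ι : Type*} [MeasurableSpace Ω]
    [Fintype ι] (μ : Measure Ω) {E : ι → Set Ω} (hE : ∀ j, MeasurableSet (E j)) {k : ℕ}
    (hk : ∀ ω, k ≤ #{j | ω ∈ E j}) : k * μ Set.univ ≤ ∑ j, μ (E j) :=
  calc k * μ Set.univ = ∫⁻ _, (k : ℝ≥0∞) ∂μ := (lintegral_const _).symm
    _ ≤ ∫⁻ ω, ∑ j, (E j).indicator 1 ω ∂μ := lintegral_mono fun ω => by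
      simpa [Set.indicator_apply, Finset.sum_boole] using hk ω
    _ = ∑ j, μ (E j) := by
      rw [lintegral_finsetSum _ fun j _ => measurable_one.indicator (hE j)]
      simp [lintegral_indicator_one (hE _)]

def Exchangeable {Ω ι β : Type*} [MeasurableSpace Ω] [MeasurableSpace β] (P : Measure Ω)
    (Z : ι → Ω → β) : Prop :=
  ∀ π : Equiv.Perm ι, P.map (fun ω i => Z (π i) ω) = P.map (fun ω i => Z i ω)

namespace Exchangeable

variable {Ω : Type*} [MeasurableSpace Ω] {P : Measure Ω}

theorem measure_preimage_comp_perm {ι β : Type*} [MeasurableSpace β] {Z : ι → Ω → β}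
    (hexch : Exchangeable P Z) (hZ : ∀ i, Measurable (Z i)) (π : Equiv.Perm ι)
    {S : Set (ι → β)} (hS : MeasurableSet S) :
    P ((fun ω i => Z (π i) ω) ⁻¹' S) = P ((fun ω i => Z i ω) ⁻¹' S) := by
  rw [← Measure.map_apply (measurable_pi_lambda _ fun i => hZ (π i)) hS, hexch π,
    Measure.map_apply (measurable_pi_lambda _ hZ) hS]

theorem natCast_le_mul_measure_rank_lt {α : Type*} [LinearOrder α] [TopologicalSpace α]
    [OrderClosedTopology α] [SecondCountableTopology α] [MeasurableSpace α]
    [OpensMeasurableSpace α] [IsProbabilityMeasure P]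
    {N : ℕ} {Z : Fin N → Ω → α} (hexch : Exchangeable P Z) (hZ : ∀ i, Measurable (Z i))
    {k : ℕ} (hk : k ≤ N) (j : Fin N) :
    (k : ℝ≥0∞) ≤ N * P {ω | Tuple.rank (fun i => Z i ω) j < k} := by
  have hE : ∀ j, MeasurableSet {ω | Tuple.rank (fun i => Z i ω) j < k} := fun j =>
    measurable_pi_lambda _ hZ (Tuple.measurableSet_rank_lt j k)
  have hsame : ∀ j', P {ω | Tuple.rank (fun i => Z i ω) j' < k} =
      P {ω | Tuple.rank (fun i => Z i ω) j < k} := fun j' => by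
    have hswap : ∀ ω, Tuple.rank (fun i => Z (Equiv.swap j j' i) ω) j =
        Tuple.rank (fun i => Z i ω) j' := fun ω =>
      (Tuple.rank_comp_perm (fun i => Z i ω) (Equiv.swap j j') j).trans
        (by rw [Equiv.swap_apply_left])
    simpa only [Set.preimage, Set.mem_ofPred_eq, hswap] using
      hexch.measure_preimage_comp_perm hZ (Equiv.swap j j') (Tuple.measurableSet_rank_lt j k)
  calc (k : ℝ≥0∞) = k * P Set.univ := by simp
    _ ≤ ∑ j', P {ω | Tuple.rank (fun i => Z i ω) j' < k} :=
      natCast_mul_measure_univ_le_sum P hE fun ω => by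
        simpa only [Set.mem_ofPred_eq] using Tuple.le_card_rank_lt (fun i => Z i ω) hk
    _ = N * P {ω | Tuple.rank (fun i => Z i ω) j < k} := by simp [hsame]

end Exchangeable

/-- Conformal coverage guarantee for exchangeable scores: if `Z 0, …, Z n` are exchangeable
real random variables, `α ∈ (0,1)`, `k = ⌈(n+1)(1-α)⌉ ≤ n`, and `q̂` is the `k`-th smallest
among the first `n` of them, then `P(Z_{n+1} ≤ q̂) ≥ 1 - α`. -/
theorem conformal_coverage_exchangeable
    {Ω : Type*} [MeasurableSpace Ω] (P : Measure Ω) [IsProbabilityMeasure P]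
    (n : ℕ) (Z : Fin (n + 1) → Ω → ℝ)
    (hZ : ∀ i, Measurable (Z i))
    (hexch : ∀ π : Equiv.Perm (Fin (n + 1)),
      Measure.map (fun ω => fun i => Z (π i) ω) P = Measure.map (fun ω => fun i => Z i ω) P)
    (α : ℝ) (hα : α ∈ Set.Ioo (0 : ℝ) 1)
    (k : ℕ) (hk : k = ⌈((n : ℝ) + 1) * (1 - α)⌉₊) (hkn : k ≤ n) :
    ENNReal.ofReal (1 - α) ≤
      P {ω | Z (Fin.last n) ω ≤ kthSmallest (fun i : Fin n => Z i.castSucc ω) k} := by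
  have hk0 : k ≠ 0 := by
    rw [hk]
    exact (Nat.ceil_pos.mpr (mul_pos (by positivity) (by linarith [hα.2]))).ne'
  have hcover := Exchangeable.natCast_le_mul_measure_rank_lt hexch hZ (by omega : k ≤ n + 1)
    (Fin.last n)
  have hsub : {ω | Tuple.rank (fun i => Z i ω) (Fin.last n) < k} ⊆
      {ω | Z (Fin.last n) ω ≤ kthSmallest (fun i : Fin n => Z i.castSucc ω) k} := by
    obtain ⟨m, rfl⟩ := Nat.exists_eq_succ_of_ne_zero hk0
    intro ω (hω : Tuple.rank _ _ < m + 1)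
    rw [Tuple.rank_last, Nat.lt_succ_iff] at hω
    exact le_kthSmallest_succ_of_card_lt_le _ ⟨m, by omega⟩ hω
  have hquantile : ((n + 1 : ℕ) : ℝ≥0∞) * ENNReal.ofReal (1 - α) ≤ k := by
    rw [← ENNReal.ofReal_natCast, ← ENNReal.ofReal_mul (by positivity),
      ← ENNReal.ofReal_natCast k]
    refine ENNReal.ofReal_le_ofReal ?_
    rw [hk]
    exact_mod_cast Nat.le_ceil _
  calc ENNReal.ofReal (1 - α) ≤ P {ω | Tuple.rank (fun i => Z i ω) (Fin.last n) < k} :=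
        (ENNReal.mul_le_mul_iff_right (by simp) (by simp)).mp (hquantile.trans hcover)
    _ ≤ _ := measure_mono hsub
end

section
/- Let s_1, …, s_n be real numbers, let 1 ≤ k ≤ n, and let t be a real number. Then t is at most the k-th smallest value among s_1, …, s_n if and only if t is at most the k-th smallest value among the n+1 numbers s_1, …, s_n, t. -/
theorem List.Pairwise.le_getElem_iff_countP_lt_le {α : Type*} [LinearOrder α] {L : List α}
    (hL : L.Pairwise (· ≤ ·)) {j : ℕ} (hj : j < L.length) (t : α) :
    t ≤ L[j] ↔ L.countP (· < t) ≤ j := by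
  induction L generalizing j with
  | nil => simp at hj
  | cons a L ih =>
    obtain ⟨ha, hL⟩ := List.pairwise_cons.1 hL
    cases j with
    | zero => simpa [List.countP_eq_zero] using fun h x hx => h.trans (ha x hx)
    | succ j =>
      rw [List.getElem_cons_succ, ih hL (by simpa using hj), List.countP_cons]
      by_cases hat : a < t
      · simp [hat]
      · have hle : t ≤ a := not_lt.1 hat
        have hzero : L.countP (· < t) = 0 :=
          List.countP_eq_zero.2 fun x hx => by simpa using hle.trans (ha x hx)
        simp [hat, hzero]

theorem Multiset.le_sort_getD_iff_countP_lt_le {α : Type*} [LinearOrder α] (M : Multiset α)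
    {j : ℕ} (hj : j < M.card) (t d : α) :
    t ≤ (M.sort (· ≤ ·)).getD j d ↔ M.countP (· < t) ≤ j := by
  have hj' : j < (M.sort (· ≤ ·)).length := by rwa [Multiset.length_sort]
  rw [List.getD_eq_getElem _ _ hj', (M.pairwise_sort _).le_getElem_iff_countP_lt_le hj',
    ← Multiset.coe_countP, Multiset.sort_eq]

theorem Multiset.ofList_ofFn_snoc {α : Type*} {n : ℕ} (s : Fin n → α) (t : α) :
    (List.ofFn (Fin.snoc s t : Fin (n + 1) → α) : Multiset α) =
      t ::ₘ (List.ofFn s : Multiset α) := by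
  rw [List.ofFn_succ', Multiset.cons_coe, Multiset.coe_eq_coe]
  simp

/-- Add-the-test-point lemma: `t` is at most the `k`-th smallest of `s_1, …, s_n` if and
only if `t` is at most the `k`-th smallest of the `n + 1` numbers `s_1, …, s_n, t`. -/
theorem le_kthSmallest_iff_le_kthSmallest_snoc
    (n : ℕ) (s : Fin n → ℝ) (k : ℕ) (hk1 : 1 ≤ k) (hkn : k ≤ n) (t : ℝ) :
    t ≤ kthSmallest s k ↔ t ≤ kthSmallest (Fin.snoc s t : Fin (n + 1) → ℝ) k := by
  have hcard : k - 1 < (List.ofFn s : Multiset ℝ).card := by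
    rw [Multiset.coe_card, List.length_ofFn]; omega
  unfold kthSmallest
  rw [Multiset.ofList_ofFn_snoc, Multiset.le_sort_getD_iff_countP_lt_le _ hcard,
    Multiset.le_sort_getD_iff_countP_lt_le _ (by rw [Multiset.card_cons]; omega),
    Multiset.countP_cons, if_neg (lt_irrefl t), add_zero]
end

section
/- Let (X_i, Y_i), i = 1, …, n+1, be i.i.d. random variables with values in a product of measurable spaces 𝒳 × 𝒴, let s : 𝒳 × 𝒴 → ℝ be measurable, let β ∈ (0,1), set k = ⌈(n+1)(1−β)⌉, and assume k ≤ n. Let q̂_abstain be the (random) k-th smallest value among s(X_1, Y_1), …, s(X_n, Y_n). Then the probability that the two-threshold policy abstains on the test point while its score exceeds the abstention threshold, namely P( s(X_{n+1}, Y_{n+1}) > q̂_abstain ), is at most β. -/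
open MeasureTheory ProbabilityTheory

/-!
The test score exceeds the `k`-th smallest calibration score exactly when at least `k` of the
`n` calibration scores lie strictly below it. The joint law of i.i.d. scores is invariant under
permutations of the coordinates, so all `n + 1` points have the same probability of having at
least `k` of the other scores strictly below them. In every realization at most `n + 1 - k` points have this
property: the lowest of them has `k` points strictly below it, and none of those qualify. Hence
`(n + 1) * P ≤ n + 1 - k ≤ (n + 1) * β`.
-/

open Finset
open scoped ENNReal

section StrictRank

variable {ι α : Type*} [Fintype ι] [LinearOrder α]

def strictRank (v : ι → α) (j : ι) : ℕ := #{i | v i < v j}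

theorem strictRank_comp_equiv (v : ι → α) (σ : ι ≃ ι) (j : ι) :
    strictRank (v ∘ σ) j = strictRank v (σ j) :=
  card_equiv σ (by simp)

theorem card_le_strictRank_le (v : ι → α) (k : ℕ) :
    #{j | k ≤ strictRank v j} ≤ Fintype.card ι - k := by
  set S : Finset ι := {j | k ≤ strictRank v j}
  rcases S.eq_empty_or_nonempty with hS | hS
  · simp [hS]
  obtain ⟨j₀, hj₀S, hj₀min⟩ := S.exists_min_image v hS
  have hk : k ≤ strictRank v j₀ := (mem_filter.1 hj₀S).2
  have hdisj : Disjoint S ({i | v i < v j₀} : Finset ι) := by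
    rw [disjoint_filter]
    exact fun i _ hiS hi => (hj₀min i (mem_filter.2 ⟨mem_univ i, hiS⟩)).not_gt hi
  have := (card_disjUnion _ _ hdisj).symm.trans_le (card_le_univ _)
  unfold strictRank at hk
  omega

theorem strictRank_last {n : ℕ} (v : Fin (n + 1) → α) :
    strictRank v (Fin.last n) = #{i : Fin n | v i.castSucc < v (Fin.last n)} := by
  simp only [strictRank, card_filter, Fin.sum_univ_castSucc, lt_irrefl, if_false, add_zero]

end StrictRank

theorem List.Pairwise.getElem_lt_iff_lt_countP {α : Type*} [LinearOrder α] {l : List α}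
    (hl : l.Pairwise (· ≤ ·)) {m : ℕ} (hm : m < l.length) (t : α) :
    l[m] < t ↔ m < l.countP (· < t) := by
  have hsplit : l = l.take m ++ l[m] :: l.drop (m + 1) := by
    rw [List.getElem_cons_drop, List.take_append_drop]
  have hcount : l.countP (· < t) = (l.take m).countP (· < t) + (if l[m] < t then 1 else 0)
      + (l.drop (m + 1)).countP (· < t) := by
    conv_lhs => rw [hsplit]
    simp only [List.countP_append, List.countP_cons, decide_eq_true_eq]
    ring
  have hlen : (l.take m).length = m := List.length_take_of_le hm.le
  rw [hsplit, List.pairwise_append, List.pairwise_cons] at hl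
  obtain ⟨-, ⟨hsuffix, -⟩, hprefix⟩ := hl
  constructor
  · intro hlt
    have : (l.take m).countP (· < t) = m := by
      rw [List.countP_eq_length.2 fun a ha => ?_, hlen]
      exact decide_eq_true ((hprefix a ha _ List.mem_cons_self).trans_lt hlt)
    rw [hcount, this, if_pos hlt]
    omega
  · intro hgt
    by_contra hge
    have : (l.drop (m + 1)).countP (· < t) = 0 := by
      rw [List.countP_eq_zero]
      intro a ha
      simpa using (not_lt.1 hge).trans (hsuffix a ha)
    have := (l.take m).countP_le_length (p := (· < t))
    rw [hcount, if_neg hge] at hgt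
    omega

-- `0 < k` because the index `k - 1` truncates: `kthSmallest f 0 = kthSmallest f 1`.
theorem kthSmallest_lt_iff {n : ℕ} (f : Fin n → ℝ) {k : ℕ} (hk : 0 < k) (hkn : k ≤ n) (t : ℝ) :
    kthSmallest f k < t ↔ k ≤ #{i | f i < t} := by
  set l := (Multiset.ofList (List.ofFn f)).sort (· ≤ ·)
  have hlen : l.length = n := by simp [l]
  have hm : k - 1 < l.length := by omega
  have hkth : kthSmallest f k = l[k - 1] := List.getD_eq_getElem _ _ hm
  have hcount : l.countP (· < t) = #{i | f i < t} := by
    rw [← Multiset.coe_countP, Multiset.sort_eq, ← Fin.univ_val_map, Multiset.countP_map]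
    rfl
  rw [hkth, (Multiset.pairwise_sort _ _).getElem_lt_iff_lt_countP hm, hcount]
  omega

section Exchangeability

variable {ι α : Type*} [Fintype ι] [LinearOrder α] [MeasurableSpace α]

theorem measure_le_strictRank_eq [DecidableEq ι] (μ : Measure α) [SigmaFinite μ] (k : ℕ)
    (j j' : ι) :
    Measure.pi (fun _ : ι => μ) {v | k ≤ strictRank v j}
      = Measure.pi (fun _ : ι => μ) {v | k ≤ strictRank v j'} := by
  set σ := Equiv.swap j j'
  have hσ : ∀ v : ι → α, MeasurableEquiv.piCongrLeft (fun _ => α) σ v = v ∘ σ := fun v =>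
    funext fun i => by
      simpa [σ] using MeasurableEquiv.piCongrLeft_apply_apply σ (β := fun _ => α) v (σ i)
  have hpre : MeasurableEquiv.piCongrLeft (fun _ => α) σ ⁻¹' {v | k ≤ strictRank v j'}
      = {v | k ≤ strictRank v j} := by
    ext v
    simp [hσ, strictRank_comp_equiv, σ]
  rw [← hpre]
  exact (measurePreserving_piCongrLeft (fun _ : ι => μ) σ).measure_preimage_equiv _

variable [TopologicalSpace α] [OrderClosedTopology α] [SecondCountableTopology α]
  [OpensMeasurableSpace α]

theorem measurableSet_le_strictRank (k : ℕ) (j : ι) :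
    MeasurableSet {v : ι → α | k ≤ strictRank v j} := by
  have : Measurable fun v : ι → α => strictRank v j := by
    simp only [strictRank, card_filter]
    exact Finset.measurable_sum _ fun i _ =>
      Measurable.ite (measurableSet_lt (measurable_pi_apply i) (measurable_pi_apply j))
        measurable_const measurable_const
  exact this measurableSet_Ici

theorem card_mul_measure_le_strictRank_le (μ : Measure α) [IsProbabilityMeasure μ] (k : ℕ)
    (j : ι) :
    Fintype.card ι * Measure.pi (fun _ : ι => μ) {v | k ≤ strictRank v j}
      ≤ (Fintype.card ι - k : ℕ) := by
  set ν := Measure.pi fun _ : ι => μ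
  calc Fintype.card ι * ν {v | k ≤ strictRank v j}
      = ∑ j', ν {v | k ≤ strictRank v j'} := by
        classical
        rw [sum_congr rfl fun j' _ => measure_le_strictRank_eq μ k j' j, sum_const, card_univ,
          nsmul_eq_mul]
    _ = ∫⁻ v, ∑ j', {v | k ≤ strictRank v j'}.indicator 1 v ∂ν := by
        simp_rw [← lintegral_indicator_one (measurableSet_le_strictRank k _)]
        exact (lintegral_finsetSum _ fun j' _ =>
          measurable_const.indicator (measurableSet_le_strictRank k j')).symm
    _ = ∫⁻ v, (#{j' | k ≤ strictRank v j'} : ℝ≥0∞) ∂ν := by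
        simp [Set.indicator_apply, sum_boole]
    _ ≤ ∫⁻ _, ((Fintype.card ι - k : ℕ) : ℝ≥0∞) ∂ν :=
        lintegral_mono fun v => Nat.cast_le.2 (card_le_strictRank_le v k)
    _ = (Fintype.card ι - k : ℕ) := by simp

theorem card_mul_measure_le_strictRank_le_of_iid {Ω : Type*} [MeasurableSpace Ω]
    (P : Measure Ω) [IsProbabilityMeasure P] (T : ι → Ω → α) (hT : ∀ i, Measurable (T i))
    (hindep : iIndepFun T P) (hident : ∀ i j, IdentDistrib (T i) (T j) P P) (k : ℕ) (j : ι) :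
    Fintype.card ι * P {ω | k ≤ strictRank (fun i => T i ω) j} ≤ (Fintype.card ι - k : ℕ) := by
  have : IsProbabilityMeasure (P.map (T j)) := Measure.isProbabilityMeasure_map (hT j).aemeasurable
  have hlaw : P.map (fun ω i => T i ω) = Measure.pi fun _ : ι => P.map (T j) := by
    rw [hindep.map_fun_eq_pi_map fun i => (hT i).aemeasurable]
    exact congrArg _ (funext fun i => (hident i j).map_eq)
  have hprob : P {ω | k ≤ strictRank (fun i => T i ω) j}
      = Measure.pi (fun _ : ι => P.map (T j)) {v | k ≤ strictRank v j} := by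
    rw [← hlaw, Measure.map_apply (measurable_pi_lambda _ hT) (measurableSet_le_strictRank k j)]
    rfl
  rw [hprob]
  exact card_mul_measure_le_strictRank_le _ k j

end Exchangeability

theorem le_ofReal_of_natCast_mul_le_sub {N k : ℕ} {β : ℝ} {p : ℝ≥0∞} (hN : 0 < N)
    (hkN : k ≤ N) (hk : N * (1 - β) ≤ k) (hp : N * p ≤ (N - k : ℕ)) :
    p ≤ ENNReal.ofReal β := by
  rw [← ENNReal.mul_le_mul_iff_right (by positivity) (ENNReal.natCast_ne_top N)]
  refine hp.trans ?_
  rw [← ENNReal.ofReal_natCast, ← ENNReal.ofReal_natCast N, ← ENNReal.ofReal_mul (by positivity)]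
  refine ENNReal.ofReal_le_ofReal ?_
  rw [Nat.cast_sub hkN]
  linarith

/-- Abstention bound for the two-threshold conformal policy: for i.i.d. pairs
`(X i, Y i)`, a measurable score `s`, `β ∈ (0,1)`, `k = ⌈(n+1)(1-β)⌉ ≤ n`, and
`q̂_abstain` the `k`-th smallest calibration score, the probability that the test score
exceeds the abstention threshold is at most `β`. -/
theorem conformal_abstention_bound
    {Ω : Type*} [MeasurableSpace Ω] (P : Measure Ω) [IsProbabilityMeasure P]
    {𝒳 𝒴 : Type*} [MeasurableSpace 𝒳] [MeasurableSpace 𝒴]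
    (n : ℕ) (X : Fin (n + 1) → Ω → 𝒳) (Y : Fin (n + 1) → Ω → 𝒴)
    (hXY : ∀ i, Measurable (fun ω => (X i ω, Y i ω)))
    (hindep : iIndepFun (fun i ω => (X i ω, Y i ω)) P)
    (hident : ∀ i j, IdentDistrib (fun ω => (X i ω, Y i ω)) (fun ω => (X j ω, Y j ω)) P P)
    (s : 𝒳 × 𝒴 → ℝ) (hs : Measurable s)
    (β : ℝ) (hβ : β ∈ Set.Ioo (0 : ℝ) 1)
    (k : ℕ) (hk : k = ⌈((n : ℝ) + 1) * (1 - β)⌉₊) (hkn : k ≤ n)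
    (qAbstain : Ω → ℝ)
    (hq : ∀ ω, qAbstain ω =
      kthSmallest (fun i : Fin n => s (X i.castSucc ω, Y i.castSucc ω)) k) :
    P {ω | qAbstain ω < s (X (Fin.last n) ω, Y (Fin.last n) ω)} ≤ ENNReal.ofReal β := by
  set T : Fin (n + 1) → Ω → ℝ := fun i ω => s (X i ω, Y i ω)
  have hk0 : 0 < k := by
    rw [hk, Nat.ceil_pos]
    exact mul_pos n.cast_add_one_pos (sub_pos.2 hβ.2)
  have hevent : {ω | qAbstain ω < T (Fin.last n) ω}
      = {ω | k ≤ strictRank (fun i => T i ω) (Fin.last n)} := by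
    ext ω
    rw [Set.mem_ofPred_eq, hq, kthSmallest_lt_iff _ hk0 hkn, Set.mem_ofPred_eq, strictRank_last]
  have hrank := card_mul_measure_le_strictRank_le_of_iid P T (fun i => hs.comp (hXY i))
    (hindep.comp _ fun _ => hs) (fun i j => (hident i j).comp hs) k (Fin.last n)
  rw [Fintype.card_fin] at hrank
  refine le_ofReal_of_natCast_mul_le_sub n.succ_pos (by omega) ?_ (hevent ▸ hrank)
  push_cast
  exact hk ▸ Nat.le_ceil _
end
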